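/- Let H be a perfect Noetherian group (i.e., H = [H, H] and every subgroup of H is finitely generated). Then the Schur multiplier H₂(H, ℤ) of H is a finitely generated abelian group if and only if for every group G admitting a surjective group homomorphism φ : G → H with kernel contained in the center of G, the commutator subgroup [G, G] is Noetherian. -/

import Mathlib

universe u

/-- A group is *Noetherian* if every subgroup is finitely generated. -/
def IsNoetherianGroup (G : Type*) [Group G] : Prop := ∀ K : Subgroup G, K.FG

/-- The *Schur multiplier* `H₂(G, ℤ)` of a group `G`, via Hopf's formula:
`H₂(G, ℤ) ≅ (R ⊓ [F, F]) / ⁅F, R⁆`, where `F` is the free group on the underlying set of `G`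
and `R` is the kernel of the canonical projection `F → G`. -/
def SchurMultiplier (G : Type*) [Group G] :=
  ((FreeGroup.lift (id : G → G)).ker ⊓ commutator (FreeGroup G)).map
    (QuotientGroup.mk' ⁅(⊤ : Subgroup (FreeGroup G)), (FreeGroup.lift (id : G → G)).ker⁆)

/-!
Let `π : F → H` be the free presentation of Hopf's formula, with kernel `R`. A central extension
`φ : G → H` receives a lift `σ : F → G` of `π`. Since `G = σ(F) · Z(G)`, `σ` maps `[F, F]` onto
`[G, G]`; it kills `[F, R]` because `σ(R) ≤ ker φ` is central; hence it maps the Schur multiplier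
`(R ∩ [F, F]) / [F, R]` onto `ker φ ∩ [G, G]`. When the multiplier is finitely generated, this
central subgroup is a finitely generated abelian group, so all its subgroups are finitely
generated, while `[G, G]` modulo it embeds in the Noetherian group `H`. Conversely, `F / [F, R]`
is itself a central extension of `H`, and the multiplier is a subgroup of its commutator subgroup.
-/

open Subgroup

section FiniteGeneration

variable {G H : Type*} [Group G] [Group H]

theorem Subgroup.FG.map {K : Subgroup G} (hK : K.FG) (f : G →* H) : (K.map f).FG := by
  rw [fg_iff_submonoid_fg] at hK ⊢
  exact hK.map f

theorem Subgroup.FG.of_map_injective {K : Subgroup G} {f : G →* H} (hf : Function.Injective f)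
    (hK : (K.map f).FG) : K.FG := by
  rw [fg_iff_submonoid_fg] at hK ⊢
  exact hK.map_injective f hf

theorem Subgroup.FG.of_inf_ker_of_map {K : Subgroup G} (f : G →* H) (hker : (K ⊓ f.ker).FG)
    (hmap : (K.map f).FG) : K.FG := by
  obtain ⟨S, hS⟩ := hker
  obtain ⟨T, hTK, hTfin, hT⟩ :
      ∃ T ⊆ (K : Set G), T.Finite ∧ Subgroup.closure (f '' T) = K.map f := by
    obtain ⟨T', hT', hT'fin⟩ := (fg_iff _).1 hmap
    refine Set.exists_subset_image_finite_and (p := fun T' => Subgroup.closure T' = K.map f) |>.1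
      ⟨T', ?_, hT'fin, hT'⟩
    rw [← coe_map, ← hT']
    exact subset_closure
  have hSK : Subgroup.closure (S : Set G) ≤ K := hS ▸ inf_le_left
  refine (fg_iff K).2 ⟨S ∪ T, le_antisymm ?_ fun k hk => ?_, S.finite_toSet.union hTfin⟩
  · exact (closure_le K).2 (Set.union_subset ((closure_le K).1 hSK) hTK)
  obtain ⟨t, ht, hft⟩ : f k ∈ (Subgroup.closure T).map f := by
    rw [MonoidHom.map_closure, hT]
    exact mem_map_of_mem f hk
  have hkt : t⁻¹ * k ∈ Subgroup.closure (S : Set G) := by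
    rw [hS]
    exact mem_inf.2 ⟨mul_mem (inv_mem ((closure_le K).2 hTK ht)) hk, by simp [hft]⟩
  rw [← mul_inv_cancel_left t k]
  exact mul_mem (Subgroup.closure_mono Set.subset_union_right ht)
    (Subgroup.closure_mono Set.subset_union_left hkt)

open scoped IsMulCommutative in
theorem Subgroup.FG.of_le_of_isMulCommutative {A B : Subgroup G} [IsMulCommutative A]
    (hA : A.FG) (hBA : B ≤ A) : B.FG := by
  have : Group.FG A := (Group.fg_iff_subgroup_fg A).2 hA
  have : Module.Finite ℤ (Additive A) := Module.Finite.iff_addGroup_fg.2 inferInstance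
  have hB : (B.subgroupOf A).FG := by
    have := IsNoetherian.noetherian (toAddSubgroup (B.subgroupOf A)).toIntSubmodule
    rwa [Submodule.fg_iff_addSubgroup_fg, AddSubgroup.toIntSubmodule_toAddSubgroup,
      ← fg_iff_add_fg] at this
  simpa [subgroupOf_map_subtype, inf_eq_left.2 hBA] using hB.map A.subtype

theorem isNoetherianGroup_subgroup_iff {C : Subgroup G} :
    IsNoetherianGroup C ↔ ∀ K ≤ C, K.FG := by
  refine ⟨fun hC K hKC => ?_, fun hC L => .of_map_injective C.subtype_injective (hC _ ?_)⟩
  · simpa [subgroupOf_map_subtype, inf_eq_left.2 hKC] using (hC (K.subgroupOf C)).map C.subtype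
  · simpa using map_le_range C.subtype L

end FiniteGeneration

section CentralExtension

open scoped commutatorElement

variable {F G H : Type*} [Group F] [Group G] [Group H]

theorem commutatorElement_mul_mul_of_mem_center {z w : G} (hz : z ∈ center G)
    (hw : w ∈ center G) (g h : G) : ⁅g * z, h * w⁆ = ⁅g, h⁆ := by
  have central_mul_left : ∀ {c : G}, c ∈ center G → ∀ a b : G, ⁅a * c, b⁆ = ⁅a, b⁆ :=
    fun {c} hc a b => by
      have hcb : Commute c b := (mem_center_iff.1 hc b).symm
      rw [commutatorElement_def, commutatorElement_def,
        show a * c * b * (a * c)⁻¹ = a * (c * b * c⁻¹) * a⁻¹ by group, hcb.mul_inv_cancel]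
  rw [central_mul_left hz, ← commutatorElement_inv, central_mul_left hw, commutatorElement_inv]

theorem commutator_eq_of_sup_center_eq_top {K : Subgroup G} (hK : K ⊔ center G = ⊤) :
    ⁅K, K⁆ = commutator G := by
  refine le_antisymm (commutator_mono le_top le_top) ?_
  rw [_root_.commutator_def, commutator_le]
  intro g _ g' _
  obtain ⟨k, hk, z, hz, rfl⟩ := mem_sup_of_normal_right.1 (hK ▸ mem_top g)
  obtain ⟨k', hk', z', hz', rfl⟩ := mem_sup_of_normal_right.1 (hK ▸ mem_top g')
  rw [commutatorElement_mul_mul_of_mem_center hz hz']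
  exact commutator_mem_commutator hk hk'

variable {φ : G →* H}

theorem map_commutator_eq_commutator_of_ker_le_center (hcent : φ.ker ≤ center G) {σ : F →* G}
    (hσ : Function.Surjective (φ.comp σ)) : (commutator F).map σ = commutator G := by
  have hcodisj : Codisjoint σ.range φ.ker := by
    rw [← map_eq_range_iff, MonoidHom.map_range, MonoidHom.range_eq_top.2 hσ]
    exact (MonoidHom.range_eq_top.2 (hσ.of_comp (g := σ))).symm
  rw [map_commutator_eq]
  exact commutator_eq_of_sup_center_eq_top
    (top_unique (hcodisj.eq_top ▸ sup_le_sup_left hcent _))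

theorem map_ker_comp_inf_commutator (hcent : φ.ker ≤ center G) {σ : F →* G}
    (hσ : Function.Surjective (φ.comp σ)) :
    ((φ.comp σ).ker ⊓ commutator F).map σ = φ.ker ⊓ commutator G := by
  rw [← map_commutator_eq_commutator_of_ker_le_center hcent hσ, ← MonoidHom.comap_ker]
  refine le_antisymm (le_inf (map_le_iff_le_comap.2 inf_le_left) (map_mono inf_le_right)) ?_
  rintro _ ⟨hx, c, hc, rfl⟩
  exact ⟨c, ⟨hx, hc⟩, rfl⟩

theorem commutator_top_ker_comp_le_ker (hcent : φ.ker ≤ center G) (σ : F →* G) :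
    ⁅(⊤ : Subgroup F), (φ.comp σ).ker⁆ ≤ σ.ker := by
  rw [← Subgroup.map_eq_bot_iff, map_commutator, eq_bot_iff, ← commutator_center_right ⊤]
  exact commutator_mono le_top
    ((map_le_iff_le_comap.2 (MonoidHom.comap_ker φ σ).ge).trans hcent)

theorem ker_lift_commutator_top_ker_le_center (f : F →* H) :
    (QuotientGroup.lift ⁅⊤, f.ker⁆ f (commutator_le_right _ _)).ker ≤
      center (F ⧸ ⁅(⊤ : Subgroup F), f.ker⁆) := by
  rw [QuotientGroup.ker_lift, ← commutator_top_left_eq_bot_iff_le_center,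
    ← map_top_of_surjective _ (QuotientGroup.mk'_surjective _), ← map_commutator,
    Subgroup.map_eq_bot_iff, QuotientGroup.ker_mk']

end CentralExtension

namespace SchurMultiplier

theorem le_commutator_quotient (H : Type*) [Group H] :
    SchurMultiplier H ≤
      commutator
        (FreeGroup H ⧸ ⁅(⊤ : Subgroup (FreeGroup H)), (FreeGroup.lift (id : H → H)).ker⁆) :=
  (map_mono inf_le_right).trans
    ((map_commutator_eq _ _).trans_le (commutator_mono le_top le_top))

theorem fg_ker_inf_commutator {G H : Type*} [Group G] [Group H] (hM : (SchurMultiplier H).FG)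
    {φ : G →* H} (hφ : Function.Surjective φ) (hcent : φ.ker ≤ center G) :
    (φ.ker ⊓ commutator G).FG := by
  set σ : FreeGroup H →* G := FreeGroup.lift (Function.surjInv hφ)
  have hφσ : φ.comp σ = FreeGroup.lift id :=
    FreeGroup.ext_hom _ _ fun h => by simp [σ, Function.surjInv_eq hφ]
  have hσ : Function.Surjective (φ.comp σ) :=
    hφσ ▸ fun h => ⟨FreeGroup.of h, FreeGroup.lift_apply_of⟩
  have hN : ⁅⊤, (FreeGroup.lift id).ker⁆ ≤ σ.ker := hφσ ▸ commutator_top_ker_comp_le_ker hcent σ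
  rw [← map_ker_comp_inf_commutator hcent hσ, hφσ, ← QuotientGroup.lift_comp_mk' _ _ hN,
    ← map_map]
  exact hM.map _

end SchurMultiplier

theorem isNoetherianGroup_commutator_of_fg_schurMultiplier {G H : Type*} [Group G] [Group H]
    (hH : IsNoetherianGroup H) (hM : (SchurMultiplier H).FG) {φ : G →* H}
    (hφ : Function.Surjective φ) (hcent : φ.ker ≤ center G) :
    IsNoetherianGroup (commutator G) := by
  have : IsMulCommutative ↥(φ.ker ⊓ commutator G) := le_centralizer_iff_isMulCommutative.1
    ((inf_le_left.trans hcent).trans (center_le_centralizer _))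
  refine isNoetherianGroup_subgroup_iff.2 fun K hK => .of_inf_ker_of_map φ ?_ (hH _)
  exact (SchurMultiplier.fg_ker_inf_commutator hM hφ hcent).of_le_of_isMulCommutative
    (inf_le_inf_right _ hK |>.trans_eq (inf_comm _ _))

theorem fg_schurMultiplier_iff_of_perfect_noetherian_general
    {H : Type u} [Group H] (hH : IsNoetherianGroup H) :
    Group.FG ↥(SchurMultiplier H) ↔
      ∀ (G : Type u) [Group G] (φ : G →* H),
        Function.Surjective φ → φ.ker ≤ Subgroup.center G →
          IsNoetherianGroup ↥(commutator G) := by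
  rw [Group.fg_iff_subgroup_fg]
  refine ⟨fun hM G _ φ => isNoetherianGroup_commutator_of_fg_schurMultiplier hH hM, fun h => ?_⟩
  set π : FreeGroup H →* H := FreeGroup.lift id
  have hπ : Function.Surjective π := fun h => ⟨FreeGroup.of h, FreeGroup.lift_apply_of⟩
  have hcover := h _ (QuotientGroup.lift _ π (commutator_le_right _ _))
    (QuotientGroup.lift_surjective_of_surjective _ _ hπ _)
    (ker_lift_commutator_top_ker_le_center π)
  exact isNoetherianGroup_subgroup_iff.1 hcover _ (SchurMultiplier.le_commutator_quotient H)

/-- Let `H` be a perfect Noetherian group. Then the Schur multiplier of `H` is finitely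
generated if and only if for every central extension `G` of `H` the commutator subgroup
`[G, G]` is Noetherian. -/
theorem fg_schurMultiplier_iff_of_perfect_noetherian
    {H : Type u} [Group H] (hperf : commutator H = ⊤) (hH : IsNoetherianGroup H) :
    Group.FG ↥(SchurMultiplier H) ↔
      ∀ (G : Type u) [Group G] (φ : G →* H),
        Function.Surjective φ → φ.ker ≤ Subgroup.center G →
          IsNoetherianGroup ↥(commutator G) :=
  fg_schurMultiplier_iff_of_perfect_noetherian_general hH
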